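/- arXiv:2503.06066 — 2 statements merged into one kernel-verified Lean document; each statement's English description precedes it below -/
import Mathlib

section
/- Let Θ = D_v^{-1/2} H W D_e^{-1} Hᵀ D_v^{-1/2} be the hypergraph Laplacian variant and Δ = I − Θ. Then Δ is symmetric positive semidefinite; equivalently, every eigenvalue of Θ is at most 1. -/
/-!
Write `A = H W D_e⁻¹ Hᵀ`, a symmetric matrix with nonnegative entries. Since the column of `H`
belonging to `e` sums to `δ(e)`, the row sums of `A` are exactly the degrees `d(v)`, so
`D_v - A` is the Laplacian of the weighted graph with adjacency `A`; its quadratic form is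
`½ Σ_{u,v} A(u,v) (x u - x v)² ≥ 0`. Finally `Δ = D_v^{-1/2} (D_v - A) D_v^{-1/2}` is
congruent to it.
-/

open Matrix

section WeightedLaplacian

variable {ι R : Type*} [Fintype ι] [DecidableEq ι]

def weightedLaplacian [CommRing R] (A : Matrix ι ι R) : Matrix ι ι R :=
  diagonal (fun u => ∑ v, A u v) - A

theorem dotProduct_weightedLaplacian_mulVec [CommRing R] (A : Matrix ι ι R) (x : ι → R) :
    x ⬝ᵥ (weightedLaplacian A *ᵥ x) = ∑ u, ∑ v, A u v * (x u ^ 2 - x u * x v) := by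
  rw [weightedLaplacian, sub_mulVec, dotProduct_sub]
  simp only [dotProduct, mulVec_diagonal]
  simp only [mulVec, dotProduct, Finset.mul_sum, Finset.sum_mul, ← Finset.sum_sub_distrib]
  exact Finset.sum_congr rfl fun u _ => Finset.sum_congr rfl fun v _ => by ring

theorem two_mul_dotProduct_weightedLaplacian_mulVec [CommRing R] {A : Matrix ι ι R}
    (hA : A.IsSymm) (x : ι → R) :
    2 * (x ⬝ᵥ (weightedLaplacian A *ᵥ x)) = ∑ u, ∑ v, A u v * (x u - x v) ^ 2 := by
  have hswap : ∑ u, ∑ v, A u v * (x u ^ 2 - x u * x v) =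
      ∑ u, ∑ v, A u v * (x v ^ 2 - x u * x v) := by
    rw [Finset.sum_comm]
    refine Finset.sum_congr rfl fun u _ => Finset.sum_congr rfl fun v _ => ?_
    rw [hA.apply v u]
    ring
  rw [two_mul, dotProduct_weightedLaplacian_mulVec]
  nth_rw 2 [hswap]
  rw [← Finset.sum_add_distrib]
  refine Finset.sum_congr rfl fun u _ => ?_
  rw [← Finset.sum_add_distrib]
  exact Finset.sum_congr rfl fun v _ => by ring

theorem posSemidef_weightedLaplacian [Field R] [LinearOrder R] [IsStrictOrderedRing R]
    [StarRing R] [TrivialStar R] {A : Matrix ι ι R} (hA : A.IsSymm)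
    (hA_nonneg : ∀ u v, 0 ≤ A u v) :
    (weightedLaplacian A).PosSemidef := by
  refine .of_dotProduct_mulVec_nonneg ?_ fun x => ?_
  · rw [IsHermitian, conjTranspose_eq_transpose_of_trivial]
    exact (isSymm_diagonal _).sub hA
  · have hsum : 0 ≤ ∑ u, ∑ v, A u v * (x u - x v) ^ 2 :=
      Finset.sum_nonneg fun u _ => Finset.sum_nonneg fun v _ =>
        mul_nonneg (hA_nonneg u v) (sq_nonneg _)
    rw [star_trivial]
    linarith [two_mul_dotProduct_weightedLaplacian_mulVec hA x]

theorem diagonal_mul_weightedLaplacian_mul_diagonal [CommRing R] {A : Matrix ι ι R} {s : ι → R}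
    (hs : ∀ u, s u * (∑ v, A u v) * s u = 1) :
    diagonal s * weightedLaplacian A * diagonal s = 1 - diagonal s * A * diagonal s := by
  rw [weightedLaplacian, Matrix.mul_sub, Matrix.sub_mul, diagonal_mul_diagonal,
    diagonal_mul_diagonal, funext hs, diagonal_one]

end WeightedLaplacian

section CliqueExpansion

variable {ι κ R : Type*} [Fintype κ] [DecidableEq κ]

theorem mul_diagonal_mul_transpose_apply [CommSemiring R] (H : Matrix ι κ R) (c : κ → R)
    (u v : ι) : (H * diagonal c * Hᵀ) u v = ∑ e, H u e * c e * H v e := by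
  rw [mul_apply]
  simp only [mul_diagonal, transpose_apply]

theorem isSymm_mul_diagonal_mul_transpose [CommSemiring R] (H : Matrix ι κ R) (c : κ → R) :
    (H * diagonal c * Hᵀ).IsSymm :=
  IsSymm.ext fun u v => by
    simp only [mul_diagonal_mul_transpose_apply]
    exact Finset.sum_congr rfl fun e _ => by ring

theorem mul_diagonal_mul_transpose_nonneg [CommSemiring R] [PartialOrder R] [IsOrderedRing R]
    {H : Matrix ι κ R} {c : κ → R} (hH : ∀ v e, 0 ≤ H v e) (hc : ∀ e, 0 ≤ c e) (u v : ι) :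
    0 ≤ (H * diagonal c * Hᵀ) u v := by
  rw [mul_diagonal_mul_transpose_apply]
  exact Finset.sum_nonneg fun e _ => mul_nonneg (mul_nonneg (hH u e) (hc e)) (hH v e)

theorem sum_mul_diagonal_div_mul_transpose_apply [Fintype ι] [Field R] {H : Matrix ι κ R}
    {δ : κ → R} (hδ : ∀ e, δ e = ∑ v, H v e) (hδ_ne : ∀ e, δ e ≠ 0) (w : κ → R) (u : ι) :
    ∑ v, (H * diagonal (fun e => w e * (δ e)⁻¹) * Hᵀ) u v = ∑ e, w e * H u e := by
  simp only [mul_diagonal_mul_transpose_apply]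
  rw [Finset.sum_comm]
  refine Finset.sum_congr rfl fun e _ => ?_
  rw [← Finset.mul_sum, ← hδ, mul_assoc, inv_mul_cancel_right₀ (hδ_ne e), mul_comm]

end CliqueExpansion

theorem hypergraph_laplacian_psd (n m : ℕ)
    (H : Matrix (Fin n) (Fin m) ℝ) (hH : ∀ v e, 0 ≤ H v e)
    (w : Fin m → ℝ) (hw : ∀ e, 0 < w e)
    (δ : Fin m → ℝ) (hδ : ∀ e, δ e = ∑ v, H v e) (hδpos : ∀ e, 0 < δ e)
    (d : Fin n → ℝ) (hd : ∀ v, d v = ∑ e, w e * H v e) (hdpos : ∀ v, 0 < d v) :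
    (1 - Matrix.diagonal (fun v => (Real.sqrt (d v))⁻¹) * H * Matrix.diagonal w *
      Matrix.diagonal (fun e => (δ e)⁻¹) * Hᵀ *
      Matrix.diagonal (fun v => (Real.sqrt (d v))⁻¹)).PosSemidef := by
  set s : Fin n → ℝ := fun v => (Real.sqrt (d v))⁻¹
  set A := H * diagonal (fun e => w e * (δ e)⁻¹) * Hᵀ
  have hrow : ∀ u, ∑ v, A u v = d u := fun u => by
    rw [hd, sum_mul_diagonal_div_mul_transpose_apply hδ fun e => (hδpos e).ne']
  have hs : ∀ u, s u * (∑ v, A u v) * s u = 1 := fun u => by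
    rw [hrow, mul_right_comm, ← mul_inv, Real.mul_self_sqrt (hdpos u).le,
      inv_mul_cancel₀ (hdpos u).ne']
  have hΘ : diagonal s * H * diagonal w * diagonal (fun e => (δ e)⁻¹) * Hᵀ * diagonal s =
      diagonal s * A * diagonal s := by
    simp only [A, Matrix.mul_assoc, diagonal_mul_diagonal]
  have hL : (weightedLaplacian A).PosSemidef :=
    posSemidef_weightedLaplacian (isSymm_mul_diagonal_mul_transpose H _)
      (mul_diagonal_mul_transpose_nonneg hH fun e => (mul_pos (hw e) (inv_pos.2 (hδpos e))).le)
  rw [hΘ, ← diagonal_mul_weightedLaplacian_mul_diagonal hs]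
  simpa only [diagonal_conjTranspose, star_trivial] using
    hL.mul_mul_conjTranspose_same (diagonal s)
end

section
/- For any f ∈ ℝⁿ, the quadratic form identity holds: (1/2) Σ_{e∈E} Σ_{u,v∈V} (w(e) H(u,e) H(v,e) / δ(e)) · (f(u)/√d(u) − f(v)/√d(v))² = fᵀ (I − Θ) f, where Θ = D_v^{-1/2} H W D_e^{-1} Hᵀ D_v^{-1/2}. -/
/-!
Per hyperedge `e`, the identity `∑ u v, a u * a v * (x u - x v)^2 = 2 * ((∑ a) * ∑ a x^2 - (∑ a x)^2)`
with `a = H(·, e)` and `∑ a = δ e` turns the left side into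
`∑ u, d u * g u^2 - ∑ e, w e / δ e * (gᵀ H)_e^2` where `g = D_v^{-1/2} f`. The first sum is `fᵀ f`,
and the second is `fᵀ Θ f` because `Θ = (D_v^{-1/2} H) (W D_e^{-1}) (D_v^{-1/2} H)ᵀ`.
-/

open Matrix Finset

theorem sum_sum_mul_mul_sub_sq {ι R : Type*} [Fintype ι] [CommRing R] (a x : ι → R) :
    ∑ i, ∑ j, a i * a j * (x i - x j) ^ 2
      = 2 * ((∑ i, a i) * ∑ i, a i * x i ^ 2 - (∑ i, a i * x i) ^ 2) := by
  have expand : ∀ i j, a i * a j * (x i - x j) ^ 2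
      = a j * (a i * x i ^ 2) + a i * (a j * x j ^ 2) - 2 * (a i * x i) * (a j * x j) :=
    fun i j => by ring
  simp only [expand, sum_sub_distrib, sum_add_distrib, ← mul_sum, ← sum_mul]
  ring

theorem sum_weighted_sub_sq_eq_of_incidence {ι κ R : Type*} [Fintype ι] [Fintype κ] [Field R]
    (H : Matrix ι κ R) (w δ : κ → R) (d : ι → R)
    (hδ : ∀ e, δ e = ∑ v, H v e) (hδ0 : ∀ e, δ e ≠ 0) (hd : ∀ v, d v = ∑ e, w e * H v e)
    (g : ι → R) :
    ∑ e, ∑ u, ∑ v, (w e * H u e * H v e / δ e) * (g u - g v) ^ 2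
      = 2 * (∑ u, d u * g u ^ 2 - ∑ e, w e / δ e * (g ᵥ* H) e ^ 2) := by
  have edge : ∀ e, ∑ u, ∑ v, (w e * H u e * H v e / δ e) * (g u - g v) ^ 2
      = 2 * (w e * ∑ u, H u e * g u ^ 2 - w e / δ e * (g ᵥ* H) e ^ 2) := by
    intro e
    have hvar := sum_sum_mul_mul_sub_sq (fun u => H u e) g
    rw [← hδ e] at hvar
    calc ∑ u, ∑ v, (w e * H u e * H v e / δ e) * (g u - g v) ^ 2
        = w e / δ e * ∑ u, ∑ v, H u e * H v e * (g u - g v) ^ 2 := by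
          simp only [mul_sum]; congr! 2; ring
      _ = w e / δ e * (2 * (δ e * ∑ u, H u e * g u ^ 2 - (g ᵥ* H) e ^ 2)) := by
          rw [hvar]; simp only [vecMul, dotProduct, mul_comm (g _)]
      _ = _ := by field_simp [hδ0 e]
  rw [sum_congr rfl fun e _ => edge e, ← mul_sum, sum_sub_distrib]
  congr 2
  simp only [hd, sum_mul, mul_sum, mul_assoc]
  exact sum_comm

theorem dotProduct_mulVec_mul_diagonal_mul_transpose {ι κ R : Type*} [Fintype ι] [Fintype κ]
    [DecidableEq κ] [CommRing R] (H : Matrix ι κ R) (c : κ → R) (x : ι → R) :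
    x ⬝ᵥ ((H * diagonal c * Hᵀ) *ᵥ x) = ∑ e, c e * (x ᵥ* H) e ^ 2 := by
  rw [← mulVec_mulVec, ← mulVec_mulVec, dotProduct_mulVec, mulVec_transpose]
  simp only [dotProduct, mulVec_diagonal]
  congr! 1; ring

theorem hypergraph_quadratic_form_identity_general (n m : ℕ)
    (H : Matrix (Fin n) (Fin m) ℝ)
    (w : Fin m → ℝ)
    (δ : Fin m → ℝ) (hδ : ∀ e, δ e = ∑ v, H v e) (hδpos : ∀ e, 0 < δ e)
    (d : Fin n → ℝ) (hd : ∀ v, d v = ∑ e, w e * H v e) (hdpos : ∀ v, 0 < d v)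
    (f : Fin n → ℝ) :
    (1 / 2) * ∑ e, ∑ u, ∑ v,
        (w e * H u e * H v e / δ e) *
          (f u / Real.sqrt (d u) - f v / Real.sqrt (d v)) ^ 2
      = f ⬝ᵥ ((1 - Matrix.diagonal (fun v => (Real.sqrt (d v))⁻¹) * H *
          Matrix.diagonal w * Matrix.diagonal (fun e => (δ e)⁻¹) * Hᵀ *
          Matrix.diagonal (fun v => (Real.sqrt (d v))⁻¹)) *ᵥ f) := by
  set s : Fin n → ℝ := fun v => (Real.sqrt (d v))⁻¹
  set g := f ᵥ* diagonal s
  have hg : ∀ u, f u / Real.sqrt (d u) = g u := fun u => by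
    simp [g, s, vecMul_diagonal, div_eq_mul_inv]
  have hdg : ∀ u, d u * g u ^ 2 = f u * f u := fun u => by
    rw [← hg, div_pow, Real.sq_sqrt (hdpos u).le, mul_div_cancel₀ _ (hdpos u).ne', sq]
  have hΘ : diagonal s * H * diagonal w * diagonal (fun e => (δ e)⁻¹) * Hᵀ * diagonal s
      = (diagonal s * H) * diagonal (fun e => w e / δ e) * (diagonal s * H)ᵀ := by
    simp only [transpose_mul, diagonal_transpose, Matrix.mul_assoc, diagonal_mul_diagonal,
      div_eq_mul_inv]
  simp_rw [hg]
  rw [sum_weighted_sub_sq_eq_of_incidence H w δ d hδ (fun e => (hδpos e).ne') hd, sub_mulVec,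
    one_mulVec, dotProduct_sub, hΘ, dotProduct_mulVec_mul_diagonal_mul_transpose,
    ← vecMul_vecMul]
  simp only [hdg, dotProduct]
  ring

theorem hypergraph_quadratic_form_identity (n m : ℕ)
    (H : Matrix (Fin n) (Fin m) ℝ) (hH : ∀ v e, 0 ≤ H v e)
    (w : Fin m → ℝ) (hw : ∀ e, 0 < w e)
    (δ : Fin m → ℝ) (hδ : ∀ e, δ e = ∑ v, H v e) (hδpos : ∀ e, 0 < δ e)
    (d : Fin n → ℝ) (hd : ∀ v, d v = ∑ e, w e * H v e) (hdpos : ∀ v, 0 < d v)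
    (f : Fin n → ℝ) :
    (1 / 2) * ∑ e, ∑ u, ∑ v,
        (w e * H u e * H v e / δ e) *
          (f u / Real.sqrt (d u) - f v / Real.sqrt (d v)) ^ 2
      = f ⬝ᵥ ((1 - Matrix.diagonal (fun v => (Real.sqrt (d v))⁻¹) * H *
          Matrix.diagonal w * Matrix.diagonal (fun e => (δ e)⁻¹) * Hᵀ *
          Matrix.diagonal (fun v => (Real.sqrt (d v))⁻¹)) *ᵥ f) :=
  hypergraph_quadratic_form_identity_general n m H w δ hδ hδpos d hd hdpos f
end
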